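/- Let r ∈ ℕ, r ≥ 1, and let L be a loss function satisfying Assumptions 1 and 3. If there exist A ∈ ℝ and B, s ∈ ℝ with B·s < 0 and s < r such that lim_{x→0⁺} (L(x) − A)/x^s = B, then there exists ξ ∈ (0,∞) such that ∫_ξ^∞ (L(ξ) − L(x))/x^{r+1} dx > 0. -/

import Mathlib

/-!
Near `0` we have `L x - A ≈ B x^s`. Writing `∫_ξ^∞ (L ξ - L x) x^(-r-1) dx` as
`(L ξ - A) ξ^(-r) / r - ∫_ξ^∞ (L x - A) x^(-r-1) dx` and inserting `(B ∓ ε) x^s` for `L x - A`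
on `(0, η]` bounds it below by `((B - ε)/r - (B + ε)/(r - s)) ξ^(s-r) - C`. At `ε = 0` the
coefficient is `-B s / (r (r - s)) > 0`, so it stays positive for small `ε`, and since `s < r`
the lower bound tends to `+∞` as `ξ → 0⁺`.
-/

open MeasureTheory Filter Set Topology Asymptotics
open scoped ENNReal NNReal BigOperators

/-- Assumption 1: bounded variation on every compact subinterval of `(0,∞)`. -/
def Assumption1 (L : ℝ → ℝ) : Prop :=
  ∀ x₁ x₂ : ℝ, 0 < x₁ → x₁ < x₂ → BoundedVariationOn L (Set.Icc x₁ x₂)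

/-- Assumption 3: `L(x) = O(x^K)` as `x → 0⁺` for some `K ∈ ℝ`, and
`L(x) = O(x^K')` as `x → ∞` for some `K' < r`. -/
def Assumption3 (r : ℕ) (L : ℝ → ℝ) : Prop :=
  (∃ K : ℝ, L =O[𝓝[>] (0 : ℝ)] fun x : ℝ => x ^ K) ∧
  (∃ K' : ℝ, K' < (r : ℝ) ∧ L =O[atTop] fun x : ℝ => x ^ K')

theorem BoundedVariationOn.integrableOn_of_isCompact {f : ℝ → ℝ} {s : Set ℝ}
    (hf : BoundedVariationOn f s) (hs : IsCompact s) : IntegrableOn f s := by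
  obtain ⟨g, h, hg, hh, rfl⟩ := hf.locallyBoundedVariationOn.exists_monotoneOn_sub_monotoneOn
  exact (hg.integrableOn_isCompact hs).sub (hh.integrableOn_isCompact hs)

theorem Assumption1.locallyIntegrableOn_Ici {L : ℝ → ℝ} (h1 : Assumption1 L) {ξ : ℝ}
    (hξ : 0 < ξ) : LocallyIntegrableOn L (Ici ξ) := by
  rw [locallyIntegrableOn_iff isClosed_Ici.isLocallyClosed]
  intro k hkξ hk
  obtain ⟨b, hb⟩ := hk.bddAbove
  have hkIcc : k ⊆ Icc ξ (max b (ξ + 1)) := fun x hx =>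
    ⟨hkξ hx, (hb hx).trans (le_max_left _ _)⟩
  have hξb : ξ < max b (ξ + 1) := (lt_add_one ξ).trans_le (le_max_right _ _)
  exact ((h1 _ _ hξ hξb).integrableOn_of_isCompact isCompact_Icc).mono_set hkIcc

section PowerWeight

variable {p ξ : ℝ}

theorem div_rpow_add_one_eq_mul_rpow_neg {x : ℝ} (hx : 0 ≤ x) (c : ℝ) :
    c / x ^ (p + 1) = c * x ^ (-(p + 1)) := by
  rw [Real.rpow_neg hx, div_eq_mul_inv]

theorem integrableOn_Ioi_div_rpow_add_one (hp : 0 < p) (hξ : 0 < ξ) (c : ℝ) :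
    IntegrableOn (fun x => c / x ^ (p + 1)) (Ioi ξ) :=
  IntegrableOn.congr_fun
    ((integrableOn_Ioi_rpow_of_lt (a := -(p + 1)) (by linarith) hξ).const_mul c)
    (fun x hx => (div_rpow_add_one_eq_mul_rpow_neg (hξ.trans hx).le c).symm) measurableSet_Ioi

theorem integral_Ioi_div_rpow_add_one (hp : 0 < p) (hξ : 0 < ξ) (c : ℝ) :
    ∫ x in Ioi ξ, c / x ^ (p + 1) = c * ξ ^ (-p) / p := by
  rw [setIntegral_congr_fun measurableSet_Ioi
      (fun x hx => div_rpow_add_one_eq_mul_rpow_neg (hξ.trans hx).le c),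
    integral_const_mul, integral_Ioi_rpow_of_lt (by linarith) hξ,
    show -(p + 1) + 1 = -p by ring, neg_div_neg_eq, mul_div_assoc]

theorem Assumption1.integrableOn_Ioi_div_rpow {L : ℝ → ℝ} (h1 : Assumption1 L) {K' : ℝ}
    (hK' : K' < p) (hO : L =O[atTop] fun x => x ^ K') (hξ : 0 < ξ) :
    IntegrableOn (fun x => L x / x ^ (p + 1)) (Ioi ξ) := by
  have hcont : ContinuousOn (fun x : ℝ => (x ^ (p + 1))⁻¹) (Ici ξ) := fun x hx =>
    ((Real.continuousAt_rpow_const _ _ (Or.inl (hξ.trans_le hx).ne')).inv₀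
      (Real.rpow_pos_of_pos (hξ.trans_le hx) _).ne').continuousWithinAt
  have hloc := (h1.locallyIntegrableOn_Ici hξ).mul_continuousOn hcont
    isClosed_Ici.isLocallyClosed
  have hO' : (fun x => L x * (x ^ (p + 1))⁻¹) =O[atTop] fun x => x ^ (K' - (p + 1)) := by
    refine (hO.mul (isBigO_refl (fun x : ℝ => (x ^ (p + 1))⁻¹) atTop)).trans_eventuallyEq ?_
    filter_upwards [eventually_gt_atTop (0 : ℝ)] with x hx
    rw [Real.rpow_sub hx, div_eq_mul_inv]
  exact (hloc.integrableOn_of_isBigO_atTop hO'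
    (integrableAtFilter_rpow_atTop_iff.2 (by linarith))).mono_set Ioi_subset_Ici_self

theorem integral_Ioi_sub_div_rpow {g : ℝ → ℝ} (hp : 0 < p) (hξ : 0 < ξ)
    (hg : IntegrableOn (fun x => g x / x ^ (p + 1)) (Ioi ξ)) :
    ∫ x in Ioi ξ, (g ξ - g x) / x ^ (p + 1) =
      g ξ * ξ ^ (-p) / p - ∫ x in Ioi ξ, g x / x ^ (p + 1) := by
  simp_rw [sub_div]
  rw [integral_sub (integrableOn_Ioi_div_rpow_add_one hp hξ _) hg,
    integral_Ioi_div_rpow_add_one hp hξ]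

theorem setIntegral_Ioc_div_rpow_le {g : ℝ → ℝ} {s b η : ℝ} (hsp : s ≠ p) (hξ : 0 < ξ)
    (hξη : ξ ≤ η) (hg : IntegrableOn (fun x => g x / x ^ (p + 1)) (Ioc ξ η))
    (hbd : ∀ x ∈ Ioc ξ η, g x ≤ b * x ^ s) :
    ∫ x in Ioc ξ η, g x / x ^ (p + 1) ≤ b * ((ξ ^ (s - p) - η ^ (s - p)) / (p - s)) := by
  have hpow : ∀ x ∈ Ioc ξ η, b * x ^ s / x ^ (p + 1) = b * x ^ (s - p - 1) := fun x hx => by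
    rw [mul_div_assoc, ← Real.rpow_sub (hξ.trans hx.1), sub_sub]
  have hcont : ContinuousOn (fun x : ℝ => x ^ (s - p - 1)) (Icc ξ η) := fun x hx =>
    (Real.continuousAt_rpow_const x _ (Or.inl (hξ.trans_le hx.1).ne')).continuousWithinAt
  have hint : IntegrableOn (fun x : ℝ => b * x ^ (s - p - 1)) (Ioc ξ η) :=
    (hcont.integrableOn_Icc.mono_set Ioc_subset_Icc_self).const_mul b
  have hzero : (0 : ℝ) ∉ uIcc ξ η := by
    rw [uIcc_of_le hξη]; exact fun h => h.1.not_gt hξ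
  calc ∫ x in Ioc ξ η, g x / x ^ (p + 1)
      ≤ ∫ x in Ioc ξ η, b * x ^ (s - p - 1) := setIntegral_mono_on hg hint measurableSet_Ioc
        fun x hx => (div_le_div_of_nonneg_right (hbd x hx)
          (Real.rpow_pos_of_pos (hξ.trans hx.1) _).le).trans_eq (hpow x hx)
    _ = b * ((ξ ^ (s - p) - η ^ (s - p)) / (p - s)) := by
      rw [integral_const_mul, ← intervalIntegral.integral_of_le hξη,
        integral_rpow (Or.inr ⟨by intro h; apply hsp; linarith, hzero⟩),
        show s - p - 1 + 1 = s - p by ring, ← neg_div_neg_eq, neg_sub, neg_sub]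

end PowerWeight

theorem exists_le_integral_Ioi_sub_div_rpow {g : ℝ → ℝ} {p s a b η : ℝ} (hp : 0 < p)
    (hs : s < p) (hg : ∀ ξ > 0, IntegrableOn (fun x => g x / x ^ (p + 1)) (Ioi ξ))
    (hbd : Ioc 0 η ⊆ {x | a * x ^ s ≤ g x ∧ g x ≤ b * x ^ s}) :
    ∃ C, ∀ ξ ∈ Ioo 0 η, (a / p - b / (p - s)) * ξ ^ (s - p) + C ≤
      ∫ x in Ioi ξ, (g ξ - g x) / x ^ (p + 1) := by
  set T := ∫ x in Ioi η, g x / x ^ (p + 1)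
  refine ⟨b * η ^ (s - p) / (p - s) - T, fun ξ ⟨hξ, hξη⟩ => ?_⟩
  have hgξ := hg ξ hξ
  have hsplit :
      ∫ x in Ioi ξ, g x / x ^ (p + 1) = (∫ x in Ioc ξ η, g x / x ^ (p + 1)) + T := by
    rw [← setIntegral_union (Ioc_disjoint_Ioi le_rfl) measurableSet_Ioi
      (hgξ.mono_set Ioc_subset_Ioi_self) (hgξ.mono_set (Ioi_subset_Ioi hξη.le)),
      Ioc_union_Ioi_eq_Ioi hξη.le]
  have hmid := setIntegral_Ioc_div_rpow_le hs.ne hξ hξη.le (hgξ.mono_set Ioc_subset_Ioi_self)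
    fun x hx => (hbd ⟨hξ.trans hx.1, hx.2⟩).2
  have hlow : a * ξ ^ (s - p) / p ≤ g ξ * ξ ^ (-p) / p := by
    rw [sub_eq_add_neg, Real.rpow_add hξ, ← mul_assoc]
    gcongr
    exact (hbd ⟨hξ, hξη.le⟩).1
  have hps : p - s ≠ 0 := (sub_pos.2 hs).ne'
  rw [integral_Ioi_sub_div_rpow hp hξ hgξ, hsplit]
  have : (a / p - b / (p - s)) * ξ ^ (s - p) + (b * η ^ (s - p) / (p - s) - T) =
      a * ξ ^ (s - p) / p - (b * ((ξ ^ (s - p) - η ^ (s - p)) / (p - s)) + T) := by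
    field_simp
    ring
  linarith

theorem eventually_mul_rpow_le_and_le_mul_rpow {g : ℝ → ℝ} {a b B s : ℝ}
    (hlim : Tendsto (fun x => g x / x ^ s) (𝓝[>] 0) (𝓝 B)) (ha : a < B) (hb : B < b) :
    ∀ᶠ x in 𝓝[>] 0, a * x ^ s ≤ g x ∧ g x ≤ b * x ^ s := by
  filter_upwards [hlim.eventually (Ioo_mem_nhds ha hb), self_mem_nhdsWithin] with x hx hx0
  have hxs : 0 < x ^ s := Real.rpow_pos_of_pos hx0 s
  exact ⟨(le_div_iff₀ hxs).1 hx.1.le, (div_le_iff₀ hxs).1 hx.2.le⟩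

theorem exists_pos_integral_Ioi_sub_div_rpow {L : ℝ → ℝ} {p A B s K' : ℝ} (hp : 0 < p)
    (h1 : Assumption1 L) (hK' : K' < p) (hO : L =O[atTop] fun x => x ^ K') (hBs : B * s < 0)
    (hs : s < p) (hlim : Tendsto (fun x => (L x - A) / x ^ s) (𝓝[>] 0) (𝓝 B)) :
    ∃ ξ, 0 < ξ ∧ 0 < ∫ x in Ioi ξ, (L ξ - L x) / x ^ (p + 1) := by
  have hcoeff : ∀ᶠ ε in 𝓝 (0 : ℝ), 0 < (B - ε) / p - (B + ε) / (p - s) := by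
    have h0 : 0 < (B - 0) / p - (B + 0) / (p - s) := by
      rw [sub_zero, add_zero, div_sub_div _ _ hp.ne' (sub_pos.2 hs).ne']
      apply div_pos <;> nlinarith
    exact continuousAt_const.eventually_lt
      ((((continuous_const.sub continuous_id).div_const p).sub
        ((continuous_const.add continuous_id).div_const _)).continuousAt) h0
  obtain ⟨ε, hc, hε⟩ := ((hcoeff.filter_mono (nhdsWithin_le_nhds (s := Ioi 0))).and
    self_mem_nhdsWithin).exists
  obtain ⟨η, hη, hbd⟩ := mem_nhdsGT_iff_exists_Ioc_subset.1
    (eventually_mul_rpow_le_and_le_mul_rpow hlim (sub_lt_self B hε) (lt_add_of_pos_right B hε))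
  have hg : ∀ ξ > 0, IntegrableOn (fun x => (L x - A) / x ^ (p + 1)) (Ioi ξ) := fun ξ hξ => by
    simp_rw [sub_div]
    exact (h1.integrableOn_Ioi_div_rpow hK' hO hξ).sub (integrableOn_Ioi_div_rpow_add_one hp hξ A)
  obtain ⟨C, hC⟩ := exists_le_integral_Ioi_sub_div_rpow hp hs hg hbd
  have hblowup : Tendsto (fun ξ => ((B - ε) / p - (B + ε) / (p - s)) * ξ ^ (s - p) + C)
      (𝓝[>] 0) atTop :=
    tendsto_atTop_add_const_right _ C
      ((tendsto_rpow_neg_nhdsGT_zero (sub_neg.2 hs)).const_mul_atTop hc)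
  obtain ⟨ξ, hpos, hξ⟩ := ((hblowup.eventually_gt_atTop 0).and (Ioo_mem_nhdsGT hη)).exists
  refine ⟨ξ, hξ.1, ?_⟩
  simpa only [sub_sub_sub_cancel_right] using hpos.trans_le (hC ξ hξ)

theorem stmt2_general (r : ℕ) (hr : 1 ≤ r) (L : ℝ → ℝ)
    (h1 : Assumption1 L) (h3 : Assumption3 r L)
    (A B s : ℝ) (hBs : B * s < 0) (hs : s < (r : ℝ))
    (hlim : Tendsto (fun x : ℝ => (L x - A) / x ^ s) (𝓝[>] (0 : ℝ)) (𝓝 B)) :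
    ∃ ξ : ℝ, 0 < ξ ∧ 0 < ∫ x in Set.Ioi ξ, (L ξ - L x) / x ^ (r + 1) := by
  obtain ⟨K', hK', hO⟩ := h3.2
  have hr0 : (0 : ℝ) < r := by exact_mod_cast hr
  simpa only [← Real.rpow_natCast, Nat.cast_add, Nat.cast_one] using
    exists_pos_integral_Ioi_sub_div_rpow hr0 h1 hK' hO hBs hs hlim

/-- Proposition 2: if `(L(x) − A)/x^s → B` as `x → 0⁺` with
`B·s < 0` and `s < r`, then there is `ξ > 0` with
`∫_ξ^∞ (L(ξ) − L(x))/x^(r+1) dx > 0`. -/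
theorem stmt2 (r : ℕ) (hr : 1 ≤ r) (L : ℝ → ℝ) (hL0 : ∀ x : ℝ, 0 ≤ L x)
    (h1 : Assumption1 L) (h3 : Assumption3 r L)
    (A B s : ℝ) (hBs : B * s < 0) (hs : s < (r : ℝ))
    (hlim : Tendsto (fun x : ℝ => (L x - A) / x ^ s) (𝓝[>] (0 : ℝ)) (𝓝 B)) :
    ∃ ξ : ℝ, 0 < ξ ∧ 0 < ∫ x in Set.Ioi ξ, (L ξ - L x) / x ^ (r + 1) :=
  stmt2_general r hr L h1 h3 A B s hBs hs hlim
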